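/- In the Frenet setting on a Riemannian 3-manifold with η = kN^♭ and dV_g the Riemannian volume form with (T,N,B) positively oriented, the 3-form η ∧ dη equals −k²(τ − h_{B,N}) dV_g. -/

import Mathlib

/-!
Since `η = k N^♭` vanishes on `T` and `B`, `(η ∧ dη)(T,N,B) = -k · dη(T,B) = k · η[T,B]`, so only
the `N`-component of `[T,B]` matters. Torsion-freeness gives `[T,B] = ∇_T B - ∇_B T`; the Frenet
equations give `g(∇_T B, N) = -τ`, and metric compatibility together with `g(T,N) = 0` gives
`g(∇_B T, N) = -g(∇_B N, T) = -h_{B,N}`.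
-/

variable {R : Type*} [CommRing R] [Algebra ℝ R]

/-- Exterior derivative of a bundled 1-form, evaluated on two vector fields. -/
def extDerOne (ω : Derivation ℝ R R →ₗ[R] R) (X Y : Derivation ℝ R R) : R :=
  X (ω Y) - Y (ω X) - ω ⁅X, Y⁆

/-- Exterior derivative of a (pointwise-defined) 1-form given as a function on
vector fields. -/
def extDerOneF (α : Derivation ℝ R R → R) (X Y : Derivation ℝ R R) : R :=
  X (α Y) - Y (α X) - α ⁅X, Y⁆

/-- Exterior derivative of a 2-form given as a function on vector fields. -/
def extDerTwo (β : Derivation ℝ R R → Derivation ℝ R R → R)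
    (X Y Z : Derivation ℝ R R) : R :=
  X (β Y Z) - Y (β X Z) + Z (β X Y) - β ⁅X, Y⁆ Z + β ⁅X, Z⁆ Y - β ⁅Y, Z⁆ X

/-- Wedge product of two 1-forms. -/
def wedge11 (α β : Derivation ℝ R R → R) (X Y : Derivation ℝ R R) : R :=
  α X * β Y - α Y * β X

/-- Wedge product of a 1-form and a 2-form. -/
def wedge12 (α : Derivation ℝ R R → R) (β : Derivation ℝ R R → Derivation ℝ R R → R)
    (X Y Z : Derivation ℝ R R) : R :=
  α X * β Y Z - α Y * β X Z + α Z * β X Y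

/-- Wedge product of a 2-form and a 1-form. -/
def wedge21 (β : Derivation ℝ R R → Derivation ℝ R R → R) (α : Derivation ℝ R R → R)
    (X Y Z : Derivation ℝ R R) : R :=
  β X Y * α Z - β X Z * α Y + β Y Z * α X

theorem wedge12_of_eq_zero {α : Derivation ℝ R R → R} {β : Derivation ℝ R R → Derivation ℝ R R → R}
    {X Y Z : Derivation ℝ R R} (hX : α X = 0) (hZ : α Z = 0) :
    wedge12 α β X Y Z = -(α Y * β X Z) := by
  simp [wedge12, hX, hZ]

theorem extDerOneF_of_eq_zero {α : Derivation ℝ R R → R} {X Y : Derivation ℝ R R}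
    (hX : α X = 0) (hY : α Y = 0) : extDerOneF α X Y = -α ⁅X, Y⁆ := by
  simp [extDerOneF, hX, hY]

theorem metric_sub_left_of_add_left {V S : Type*} [AddGroup V] [AddCommGroup S] (g : V → V → S)
    (hg_add : ∀ X Y Z, g (X + Y) Z = g X Z + g Y Z) (X Y Z : V) :
    g (X - Y) Z = g X Z - g Y Z := by
  rw [eq_sub_iff_add_eq, ← hg_add, sub_add_cancel]

theorem metric_cov_eq_neg_of_orthogonal (g : Derivation ℝ R R → Derivation ℝ R R → R)
    (cov : Derivation ℝ R R → Derivation ℝ R R → Derivation ℝ R R)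
    (hg_symm : ∀ X Y, g X Y = g Y X)
    (compat : ∀ X Y Z, X (g Y Z) = g (cov X Y) Z + g Y (cov X Z))
    {X Y Z : Derivation ℝ R R} (hYZ : g Y Z = 0) :
    g (cov X Y) Z = -g (cov X Z) Y := by
  have h := compat X Y Z
  rw [hYZ, map_zero, hg_symm Y] at h
  linear_combination -h

theorem stmt10_general
    (g : Derivation ℝ R R → Derivation ℝ R R → R)
    (cov : Derivation ℝ R R → Derivation ℝ R R → Derivation ℝ R R)
    (hg_symm : ∀ X Y, g X Y = g Y X)
    (hg_add : ∀ X Y Z, g (X + Y) Z = g X Z + g Y Z)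
    (hg_smul : ∀ (f : R) X Y, g (f • X) Y = f * g X Y)
    (compat : ∀ X Y Z, X (g Y Z) = g (cov X Y) Z + g Y (cov X Z))
    (torsion_free : ∀ X Y, cov X Y - cov Y X = ⁅X, Y⁆)
    (T N B : Derivation ℝ R R)
    (hNN : g N N = 1)
    (hTN : g T N = 0) (hNB : g N B = 0)
    (k τ : R)
    (hFr3 : cov T B = (-τ) • N)
    (η : Derivation ℝ R R → R)
    (hη : ∀ X, η X = k * g N X)
    (h : Derivation ℝ R R → Derivation ℝ R R → R)
    (hh : ∀ X Y, h X Y = g (cov X Y) T)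
    (vol : Derivation ℝ R R → Derivation ℝ R R → Derivation ℝ R R → R)
    (hvol : vol T N B = 1) :
    wedge12 η (extDerOneF η) T N B = -(k ^ 2 * (τ - h B N)) * vol T N B := by
  have hηT : η T = 0 := by rw [hη, hg_symm, hTN, mul_zero]
  have hηB : η B = 0 := by rw [hη, hNB, mul_zero]
  have hlie : g ⁅T, B⁆ N = -τ + h B N := by
    rw [← torsion_free, metric_sub_left_of_add_left g hg_add, hFr3, hg_smul, hNN,
      metric_cov_eq_neg_of_orthogonal g cov hg_symm compat hTN, hh]
    ring
  rw [wedge12_of_eq_zero hηT hηB, extDerOneF_of_eq_zero hηT hηB, hη, hη, hNN, hg_symm N, hlie,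
    hvol]
  ring

/-- in the Frenet setting, with `η = k N^♭`, `h_{B,N} = g(∇_B N,T)`
and `dV_g` the Riemannian volume form with `(T,N,B)` positively oriented
(`dV_g(T,N,B) = 1`), the 3-form `η ∧ dη` equals `−k²(τ − h_{B,N}) dV_g`
(both sides evaluated on the frame `(T,N,B)`). -/
theorem stmt10
    (g : Derivation ℝ R R → Derivation ℝ R R → R)
    (cov : Derivation ℝ R R → Derivation ℝ R R → Derivation ℝ R R)
    (hg_symm : ∀ X Y, g X Y = g Y X)
    (hg_add : ∀ X Y Z, g (X + Y) Z = g X Z + g Y Z)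
    (hg_smul : ∀ (f : R) X Y, g (f • X) Y = f * g X Y)
    (hc_addl : ∀ X Y Z, cov (X + Y) Z = cov X Z + cov Y Z)
    (hc_smull : ∀ (f : R) X Y, cov (f • X) Y = f • cov X Y)
    (hc_addr : ∀ X Y Z, cov X (Y + Z) = cov X Y + cov X Z)
    (hc_leib : ∀ (f : R) X Y, cov X (f • Y) = (X f) • Y + f • cov X Y)
    (compat : ∀ X Y Z, X (g Y Z) = g (cov X Y) Z + g Y (cov X Z))
    (torsion_free : ∀ X Y, cov X Y - cov Y X = ⁅X, Y⁆)
    (T N B : Derivation ℝ R R)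
    (hTT : g T T = 1) (hNN : g N N = 1) (hBB : g B B = 1)
    (hTN : g T N = 0) (hTB : g T B = 0) (hNB : g N B = 0)
    (hframe : ∀ X, X = g X T • T + g X N • N + g X B • B)
    (k τ : R)
    (hFr1 : cov T T = k • N)
    (hFr2 : cov T N = (-k) • T + τ • B)
    (hFr3 : cov T B = (-τ) • N)
    (η : Derivation ℝ R R → R)
    (hη : ∀ X, η X = k * g N X)
    (h : Derivation ℝ R R → Derivation ℝ R R → R)
    (hh : ∀ X Y, h X Y = g (cov X Y) T)
    (vol : Derivation ℝ R R → Derivation ℝ R R → Derivation ℝ R R → R)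
    (hvol : vol T N B = 1) :
    wedge12 η (extDerOneF η) T N B = -(k ^ 2 * (τ - h B N)) * vol T N B :=
  stmt10_general g cov hg_symm hg_add hg_smul compat torsion_free T N B hNN hTN hNB k τ hFr3 η hη h
    hh vol hvol
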